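/- Indistinguishability lemma (backward direction of Proposition 1): let U = {1,...,n} and S = {S_1,...,S_m} ⊆ 2^U. Let ψ be a prenex quantified formula over the unary predicate 'in' whose quantifiers range over the singleton types Set_{i_1},...,Set_{i_q} (so the variables can only be bound to the objects S_{i_1},...,S_{i_q}), and let w ∈ U be such that w ∉ S_{i_l} for every l ∈ {1,...,q}. Then ⟨t_w, I_w⟩ ⊨ ψ implies ⟨t_d, I_d⟩ ⊨ ψ, where t_w = ⟨{in(S_i) | w ∈ S_i}⟩ and t_d = ⟨{in(d)}⟩. -/

import Mathlib

/-! Quantifier-free temporal formulas over predicates `P` and variables `X`,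
evaluated on finite traces of states (sets of fluents over objects `O`). -/

/-- A fluent is a predicate applied to a list of objects. -/
abbrev Fluent (P O : Type) := P × List O

/-- A state is a set of fluents. -/
abbrev PState (P O : Type) := Set (Fluent P O)

/-- Quantifier-free temporal formulas:
`⊤`, atoms `p(x₁,…)`, `¬`, `∧`, `∨`, `⇒`, next `○`, previous `●`,
once (past eventually) `⧫`, and until `U`. -/
inductive TLForm (P X : Type) : Type where
  | top : TLForm P X
  | atom (p : P) (args : List X) : TLForm P X
  | neg (φ : TLForm P X) : TLForm P X
  | conj (φ ψ : TLForm P X) : TLForm P X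
  | disj (φ ψ : TLForm P X) : TLForm P X
  | impl (φ ψ : TLForm P X) : TLForm P X
  | next (φ : TLForm P X) : TLForm P X
  | prev (φ : TLForm P X) : TLForm P X
  | once (φ : TLForm P X) : TLForm P X
  | untl (φ ψ : TLForm P X) : TLForm P X

variable {P X O : Type}

/-- Satisfaction `t, e, i ⊨ φ` of a quantifier-free temporal formula at
position `i` of the trace `⟨t 0, …, t n⟩` (positions range over `0,…,n`),
under environment `e : X → O`. -/
def TLSat (t : ℕ → PState P O) (n : ℕ) (e : X → O) : TLForm P X → ℕ → Prop
  | TLForm.top, _ => True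
  | TLForm.atom p xs, i => (p, xs.map e) ∈ t i
  | TLForm.neg φ, i => ¬ TLSat t n e φ i
  | TLForm.conj φ ψ, i => TLSat t n e φ i ∧ TLSat t n e ψ i
  | TLForm.disj φ ψ, i => TLSat t n e φ i ∨ TLSat t n e ψ i
  | TLForm.impl φ ψ, i => TLSat t n e φ i → TLSat t n e ψ i
  | TLForm.next φ, i => i < n ∧ TLSat t n e φ (i + 1)
  | TLForm.prev φ, i => 0 < i ∧ TLSat t n e φ (i - 1)
  | TLForm.once φ, i => ∃ j, j ≤ i ∧ TLSat t n e φ j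
  | TLForm.untl φ ψ, i =>
      ∃ j, i ≤ j ∧ j ≤ n ∧ TLSat t n e ψ j ∧ ∀ k, i ≤ k → k < j → TLSat t n e φ k

/-- Derived modality `◇φ := ⊤ U φ`. -/
def TLForm.eventually (φ : TLForm P X) : TLForm P X := TLForm.untl TLForm.top φ

/-- Derived modality `□φ := ¬◇¬φ = ¬(⊤ U ¬φ)`. -/
def TLForm.always (φ : TLForm P X) : TLForm P X :=
  TLForm.neg (TLForm.untl TLForm.top (TLForm.neg φ))

/-- Derived past modality `■φ := ¬⧫¬φ`. -/
def TLForm.pastAlways (φ : TLForm P X) : TLForm P X :=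
  TLForm.neg (TLForm.once (TLForm.neg φ))

/-! First-order temporal formulas in prenex form: quantifiers `∃x∈τ` and
`∀x∈τ` over typed objects, with a quantifier-free temporal matrix. -/

/-- Prenex quantified first-order temporal formulas over predicates `P`,
variables `X` and type symbols `T`. -/
inductive FTLForm (P X T : Type) : Type where
  | ex (x : X) (ty : T) (ψ : FTLForm P X T) : FTLForm P X T
  | all (x : X) (ty : T) (ψ : FTLForm P X T) : FTLForm P X T
  | qf (φ : TLForm P X) : FTLForm P X T

variable {T : Type} [DecidableEq X]

/-- Satisfaction `⟨t, I⟩, e ⊨ ψ` of a prenex formula on an instantiated trace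
`⟨t 0, …, t n⟩` whose objects are typed by `τfn : O → T`, under environment
`e`. Quantified formulas update the environment; a quantifier-free formula is
evaluated at position `0` of the trace. -/
def FSat (τfn : O → T) (t : ℕ → PState P O) (n : ℕ) :
    FTLForm P X T → (X → O) → Prop
  | FTLForm.ex x ty ψ, e => ∃ o : O, τfn o = ty ∧ FSat τfn t n ψ (Function.update e x o)
  | FTLForm.all x ty ψ, e => ∀ o : O, τfn o = ty → FSat τfn t n ψ (Function.update e x o)
  | FTLForm.qf φ, e => TLSat t n e φ 0

/-! The Set Cover reduction of Proposition 1. A Set Cover instance is given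
by `U = Fin n` and a family `S : Fin m → Set (Fin n)`. The reduction uses a
single unary predicate `in` (the unique element of `Unit`), natural numbers
as variables, objects `S_1,…,S_m` plus a mock object `d`, a singleton type
`Set_i` for each `S_i`, and the root type for `d`. -/

/-- Objects of the reduction: `Sum.inl i` is the set `S_i`, `Sum.inr ()` is
the mock object `d`. -/
abbrev SCObj (m : ℕ) := Fin m ⊕ Unit

/-- Type symbols of the reduction: `some i` is the singleton type `Set_i`;
`none` is the type of the mock object `d`. -/
abbrev SCType (m : ℕ) := Option (Fin m)

/-- The typing function of the reduction: `τ(S_i) = Set_i`, and `d` gets the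
remaining type. -/
def scTau (m : ℕ) : SCObj m → SCType m
  | Sum.inl i => some i
  | Sum.inr _ => none

/-- The single state `I_j = {in(S_i) | j ∈ S_i}` of the trace `t_j`
associated to the element `j ∈ U`. -/
def scStateJ {n m : ℕ} (S : Fin m → Set (Fin n)) (j : Fin n) :
    PState Unit (SCObj m) :=
  {f | ∃ i : Fin m, j ∈ S i ∧ f = ((), [Sum.inl i])}

/-- The single state `I_d = {in(d)}` of the mock trace `t_d`. -/
def scStateD (m : ℕ) : PState Unit (SCObj m) :=
  {((), [Sum.inr ()])}

/-- The set of variables occurring in the atoms of a quantifier-free formula. -/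
def TLForm.vars : TLForm P X → Set X
  | TLForm.top => ∅
  | TLForm.atom _ xs => {x | x ∈ xs}
  | TLForm.neg φ => φ.vars
  | TLForm.conj φ ψ => φ.vars ∪ ψ.vars
  | TLForm.disj φ ψ => φ.vars ∪ ψ.vars
  | TLForm.impl φ ψ => φ.vars ∪ ψ.vars
  | TLForm.next φ => φ.vars
  | TLForm.prev φ => φ.vars
  | TLForm.once φ => φ.vars
  | TLForm.untl φ ψ => φ.vars ∪ ψ.vars

/-- The set of types quantified upon in a prenex formula. -/
def quantTypes : FTLForm P X T → Set T
  | FTLForm.ex _ ty ψ => insert ty (quantTypes ψ)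
  | FTLForm.all _ ty ψ => insert ty (quantTypes ψ)
  | FTLForm.qf _ => ∅

/-- `ClosedUnder ψ B`: every variable of an atom in the matrix of the prenex
formula `ψ` is either in `B` or bound by one of the quantifiers of `ψ`.
`ClosedUnder ψ ∅` means that `ψ` is a sentence. -/
def ClosedUnder : FTLForm P X T → Set X → Prop
  | FTLForm.ex x _ ψ, B => ClosedUnder ψ (insert x B)
  | FTLForm.all x _ ψ, B => ClosedUnder ψ (insert x B)
  | FTLForm.qf φ, B => φ.vars ⊆ B

/-! Every object a quantifier of `ψ` can bind is a set `S_i` with `w ∉ S_i`, so under every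
environment reached while evaluating `ψ` each atom `in(x)` is false both in `I_w` and in `I_d`.
The two traces thus agree on all atoms that matter, hence on `ψ`. -/

section Congruence

variable {t₁ t₂ : ℕ → PState P O} {n : ℕ} {G : O → Prop}

theorem TLSat_congr {V : Type}
    (hG : ∀ p os, (∀ o ∈ os, G o) → ∀ i, (p, os) ∈ t₁ i ↔ (p, os) ∈ t₂ i) {e : V → O} :
    ∀ (φ : TLForm P V), (∀ x ∈ φ.vars, G (e x)) → ∀ i, TLSat t₁ n e φ i ↔ TLSat t₂ n e φ i
  | .top, _, _ => Iff.rfl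
  | .atom p _, he, i => hG p _ (List.forall_mem_map.mpr he) i
  | .neg φ, he, i => not_congr (TLSat_congr hG φ he i)
  | .conj φ ψ, he, i =>
    and_congr (TLSat_congr hG φ (fun x hx => he x (.inl hx)) i)
      (TLSat_congr hG ψ (fun x hx => he x (.inr hx)) i)
  | .disj φ ψ, he, i =>
    or_congr (TLSat_congr hG φ (fun x hx => he x (.inl hx)) i)
      (TLSat_congr hG ψ (fun x hx => he x (.inr hx)) i)
  | .impl φ ψ, he, i =>
    imp_congr (TLSat_congr hG φ (fun x hx => he x (.inl hx)) i)
      (TLSat_congr hG ψ (fun x hx => he x (.inr hx)) i)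
  | .next φ, he, i => and_congr_right' (TLSat_congr hG φ he (i + 1))
  | .prev φ, he, i => and_congr_right' (TLSat_congr hG φ he (i - 1))
  | .once φ, he, _ => exists_congr fun j => and_congr_right' (TLSat_congr hG φ he j)
  | .untl φ ψ, he, _ =>
    exists_congr fun j => and_congr_right' <| and_congr_right' <|
      and_congr (TLSat_congr hG ψ (fun x hx => he x (.inr hx)) j) <|
        forall_congr' fun k => imp_congr_right fun _ => imp_congr_right fun _ =>
          TLSat_congr hG φ (fun x hx => he x (.inl hx)) k

theorem forall_mem_insert_update {e : X → O} {B : Set X} {x : X} {o : O}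
    (he : ∀ y ∈ B, G (e y)) (ho : G o) : ∀ y ∈ insert x B, G (Function.update e x o y) := by
  rintro y (rfl | hy)
  · simpa using ho
  · rcases eq_or_ne y x with rfl | hyx
    · simpa using ho
    · simpa [Function.update_of_ne hyx] using he y hy

theorem FSat_congr {τfn : O → T}
    (hG : ∀ p os, (∀ o ∈ os, G o) → ∀ i, (p, os) ∈ t₁ i ↔ (p, os) ∈ t₂ i) :
    ∀ {ψ : FTLForm P X T} {B : Set X} {e : X → O}, ClosedUnder ψ B →
      (∀ o, τfn o ∈ quantTypes ψ → G o) → (∀ x ∈ B, G (e x)) →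
      (FSat τfn t₁ n ψ e ↔ FSat τfn t₂ n ψ e)
  | .ex _ _ _, _, _, hc, hq, he =>
    exists_congr fun o => and_congr_right fun ho =>
      FSat_congr hG hc (fun o' h => hq o' (.inr h))
        (forall_mem_insert_update he (hq o (.inl ho)))
  | .all _ _ _, _, _, hc, hq, he =>
    forall_congr' fun o => imp_congr_right fun ho =>
      FSat_congr hG hc (fun o' h => hq o' (.inr h))
        (forall_mem_insert_update he (hq o (.inl ho)))
  | .qf _, _, _, hc, _, he => TLSat_congr hG _ (fun x hx => he x (hc hx)) 0

end Congruence

section SetCover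

variable {n m : ℕ}

def scAvoiding (S : Fin m → Set (Fin n)) (w : Fin n) : SCObj m → Prop
  | Sum.inl i => w ∉ S i
  | Sum.inr _ => False

theorem scTau_eq_some {o : SCObj m} {i : Fin m} : scTau m o = some i ↔ o = Sum.inl i := by
  cases o <;> simp [scTau]

theorem fluent_notMem_scStateJ {S : Fin m → Set (Fin n)} {w : Fin n} {p : Unit}
    {os : List (SCObj m)} (hos : ∀ o ∈ os, scAvoiding S w o) : (p, os) ∉ scStateJ S w := by
  rintro ⟨i, hwi, hf⟩
  simp only [Prod.mk.injEq, true_and] at hf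
  subst hf
  exact hos _ (List.mem_singleton_self _) hwi

theorem fluent_notMem_scStateD {S : Fin m → Set (Fin n)} {w : Fin n} {p : Unit}
    {os : List (SCObj m)} (hos : ∀ o ∈ os, scAvoiding S w o) : (p, os) ∉ scStateD m := by
  intro hf
  simp only [scStateD, Set.mem_singleton_iff, Prod.mk.injEq, true_and] at hf
  subst hf
  exact hos _ (List.mem_singleton_self _)

end SetCover

/-- indistinguishability lemma (backward direction of
Proposition 1). Let `ψ` be a closed prenex formula over the unary predicate
`in` whose quantifiers all range over singleton types `Set_{i_l}` with
`w ∉ S_{i_l}`. Then if the single-state trace `t_w = ⟨{in(S_i) | w ∈ S_i}⟩`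
satisfies `ψ`, so does the mock trace `t_d = ⟨{in(d)}⟩`. -/
theorem set_cover_indistinguishability (n m : ℕ) (S : Fin m → Set (Fin n))
    (w : Fin n) (ψ : FTLForm Unit ℕ (SCType m))
    (hclosed : ClosedUnder ψ (∅ : Set ℕ))
    (hquant : ∀ ty ∈ quantTypes ψ, ∃ i : Fin m, ty = some i ∧ w ∉ S i)
    (e : ℕ → SCObj m) :
    FSat (scTau m) (fun _ => scStateJ S w) 0 ψ e →
    FSat (scTau m) (fun _ => scStateD m) 0 ψ e := by
  have hatoms : ∀ p os, (∀ o ∈ os, scAvoiding S w o) → ∀ _ : ℕ,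
      (p, os) ∈ scStateJ S w ↔ (p, os) ∈ scStateD m := fun _ _ hos _ =>
    iff_of_false (fluent_notMem_scStateJ hos) (fluent_notMem_scStateD hos)
  have hbound : ∀ o, scTau m o ∈ quantTypes ψ → scAvoiding S w o := by
    intro o ho
    obtain ⟨i, hi, hwi⟩ := hquant _ ho
    rw [scTau_eq_some.mp hi]
    exact hwi
  exact (FSat_congr hatoms hclosed hbound (fun _ => nofun)).mp
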